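/- arXiv:0707.1771 — 3 statements merged into one kernel-verified Lean document; each statement's English description precedes it below -/
import Mathlib

section
/- Let a > max{1, α} and b < −1. Then there is at most one function w, continuous on [0,1] and twice continuously differentiable on (0,1), satisfying w''(x) + h(w(x)) = 0 for all x ∈ (0,1), w(0) = a and w(1) = b. -/
open MeasureTheory Metric Set Filter Topology

noncomputable section

/-- Euclidean space ℝ^N. -/
abbrev Euc (N : ℕ) : Type := EuclideanSpace ℝ (Fin N)

/-- The Laplacian of `u : Euc N → ℝ` at `x`, as the trace of the second derivative. -/
def lap {N : ℕ} (u : Euc N → ℝ) (x : Euc N) : ℝ :=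
  ∑ i : Fin N,
    iteratedFDeriv ℝ 2 u x ![EuclideanSpace.single i (1 : ℝ), EuclideanSpace.single i (1 : ℝ)]

/-- `Ω` is a bounded, open, connected subset of ℝ^N. -/
def NiceDomain {N : ℕ} (Ω : Set (Euc N)) : Prop :=
  IsOpen Ω ∧ IsConnected Ω ∧ Bornology.IsBounded Ω

/-- Hypothesis (a): `f` is continuously differentiable on `[0,∞)`, `f 0 = 0` and
`f s < 0` for `s > 1`. -/
def NiceReaction (f : ℝ → ℝ) : Prop :=
  ContDiffOn ℝ 1 f (Ici (0 : ℝ)) ∧ f 0 = 0 ∧ ∀ s > (1 : ℝ), f s < 0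

/-- The limit nonlinearity `h(w) = α f(α⁻¹ w⁺) − g(−w⁻)`. -/
def hlim (f g : ℝ → ℝ) (α : ℝ) (w : ℝ) : ℝ :=
  α * f (α⁻¹ * max w 0) - g (-(min w 0))

/-- All three `W^{2,p}(Ω)`-norm pieces of `w` (function, gradient, Hessian) are
bounded by `C` in `L^p(Ω)`. -/
def W2pBound {N : ℕ} (p : ℝ) (Ω : Set (Euc N)) (w : Euc N → ℝ) (C : ℝ) : Prop :=
  eLpNorm w (ENNReal.ofReal p) (volume.restrict Ω) ≤ ENNReal.ofReal C ∧
  eLpNorm (fun x => ‖fderiv ℝ w x‖) (ENNReal.ofReal p) (volume.restrict Ω) ≤ ENNReal.ofReal C ∧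
  eLpNorm (fun x => ‖iteratedFDeriv ℝ 2 w x‖) (ENNReal.ofReal p) (volume.restrict Ω) ≤
    ENNReal.ofReal C

/-- `w` belongs to `W^{2,p}(Ω)`; since `p > N` such functions have classical regularity,
which we record as part of the definition. -/
def MemW2p {N : ℕ} (p : ℝ) (Ω : Set (Euc N)) (w : Euc N → ℝ) : Prop :=
  ContDiffOn ℝ 2 w Ω ∧ ContinuousOn w (closure Ω) ∧ ∃ C, W2pBound p Ω w C

/-- The `C^{1,lam}(S)` norm of `w` is at most `ε`. -/
def C1HolderSmall {N : ℕ} (lam : ℝ) (S : Set (Euc N)) (w : Euc N → ℝ) (ε : ℝ) : Prop :=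
  (∀ x ∈ S, |w x| ≤ ε ∧ ‖fderiv ℝ w x‖ ≤ ε) ∧
  ∀ x ∈ S, ∀ y ∈ S, ‖fderiv ℝ w x - fderiv ℝ w y‖ ≤ ε * ‖x - y‖ ^ lam

/-- Hypothesis (b1) for a single pair of boundary data: `m₁, m₂ ≥ 0` and
`m₁, m₂ ∈ W^{2,p}(Ω)`. -/
def B1 {N : ℕ} (p : ℝ) (Ω : Set (Euc N)) (m1 m2 : Euc N → ℝ) : Prop :=
  (∀ x ∈ closure Ω, 0 ≤ m1 x ∧ 0 ≤ m2 x) ∧ MemW2p p Ω m1 ∧ MemW2p p Ω m2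

/-- Hypothesis (b2): `m₁ᵏ, m₂ᵏ` are bounded in `W^{2,p}(Ω)` independently of `k`. -/
def B2 {N : ℕ} (p : ℝ) (Ω : Set (Euc N)) (m1k m2k : ℕ → Euc N → ℝ) : Prop :=
  ∃ C, ∀ k, W2pBound p Ω (m1k k) C ∧ W2pBound p Ω (m2k k) C

/-- Hypothesis (b3): there are `m₁, m₂ ∈ W^{2,p}(Ω)` with `α m₁ − m₂` not identically
zero on `∂Ω` such that `mᵢᵏ → mᵢ` in `C^{1,λ'}(closure Ω)` for every `λ' ∈ (0, 1 − N/p)`. -/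
def B3 {N : ℕ} (p α : ℝ) (Ω : Set (Euc N)) (m1k m2k : ℕ → Euc N → ℝ)
    (m1 m2 : Euc N → ℝ) : Prop :=
  MemW2p p Ω m1 ∧ MemW2p p Ω m2 ∧ (∃ x ∈ frontier Ω, α * m1 x - m2 x ≠ 0) ∧
  ∀ lam' ∈ Ioo (0 : ℝ) (1 - (N : ℝ) / p), ∀ ε > (0 : ℝ), ∃ K : ℕ, ∀ k ≥ K,
    C1HolderSmall lam' (closure Ω) (fun x => m1k k x - m1 x) ε ∧
    C1HolderSmall lam' (closure Ω) (fun x => m2k k x - m2 x) ε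

/-- `(u,v)` is a solution of problem `(P_k)` on `Ω × (0,∞)` with boundary data `m₁, m₂`
and initial data `u₀, v₀`. -/
def IsSolPk {N : ℕ} (Ω : Set (Euc N)) (f g : ℝ → ℝ) (α k : ℝ)
    (m1 m2 u0 v0 : Euc N → ℝ) (u v : Euc N → ℝ → ℝ) : Prop :=
  ContinuousOn (fun q : Euc N × ℝ => u q.1 q.2) (closure Ω ×ˢ Ici (0 : ℝ)) ∧
  ContinuousOn (fun q : Euc N × ℝ => v q.1 q.2) (closure Ω ×ˢ Ici (0 : ℝ)) ∧
  (∀ t > (0 : ℝ), ContDiffOn ℝ 2 (fun x => u x t) Ω ∧ ContDiffOn ℝ 2 (fun x => v x t) Ω) ∧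
  (∀ x ∈ Ω, ∀ t > (0 : ℝ),
    HasDerivAt (fun s => u x s) (lap (fun y => u y t) x + f (u x t) - k * u x t * v x t) t ∧
    HasDerivAt (fun s => v x s) (lap (fun y => v y t) x + g (v x t) - α * k * u x t * v x t) t) ∧
  (∀ x ∈ frontier Ω, ∀ t > (0 : ℝ), u x t = m1 x ∧ v x t = m2 x) ∧
  (∀ x ∈ Ω, u x 0 = u0 x ∧ v x 0 = v0 x)

/-- `(u,v)` is a solution of problem `(P_{k,T})`, i.e. of `(P_k)` on `Ω × (0,T)`. -/
def IsSolPkT {N : ℕ} (Ω : Set (Euc N)) (f g : ℝ → ℝ) (α k : ℝ)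
    (m1 m2 u0 v0 : Euc N → ℝ) (u v : Euc N → ℝ → ℝ) (T : ℝ) : Prop :=
  ContinuousOn (fun q : Euc N × ℝ => u q.1 q.2) (closure Ω ×ˢ Icc (0 : ℝ) T) ∧
  ContinuousOn (fun q : Euc N × ℝ => v q.1 q.2) (closure Ω ×ˢ Icc (0 : ℝ) T) ∧
  (∀ t ∈ Ioo (0 : ℝ) T, ContDiffOn ℝ 2 (fun x => u x t) Ω ∧ ContDiffOn ℝ 2 (fun x => v x t) Ω) ∧
  (∀ x ∈ Ω, ∀ t ∈ Ioo (0 : ℝ) T,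
    HasDerivAt (fun s => u x s) (lap (fun y => u y t) x + f (u x t) - k * u x t * v x t) t ∧
    HasDerivAt (fun s => v x s) (lap (fun y => v y t) x + g (v x t) - α * k * u x t * v x t) t) ∧
  (∀ x ∈ frontier Ω, ∀ t ∈ Ioo (0 : ℝ) T, u x t = m1 x ∧ v x t = m2 x) ∧
  (∀ x ∈ Ω, u x 0 = u0 x ∧ v x 0 = v0 x)

/-- `(u,v)` is an entire solution (defined for all `t ∈ ℝ`) of the `k`-dependent system
with boundary data `m₁, m₂`. -/
def IsSolPkEntire {N : ℕ} (Ω : Set (Euc N)) (f g : ℝ → ℝ) (α k : ℝ)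
    (m1 m2 : Euc N → ℝ) (u v : Euc N → ℝ → ℝ) : Prop :=
  ContinuousOn (fun q : Euc N × ℝ => u q.1 q.2) (closure Ω ×ˢ (univ : Set ℝ)) ∧
  ContinuousOn (fun q : Euc N × ℝ => v q.1 q.2) (closure Ω ×ˢ (univ : Set ℝ)) ∧
  (∀ t : ℝ, ContDiffOn ℝ 2 (fun x => u x t) Ω ∧ ContDiffOn ℝ 2 (fun x => v x t) Ω) ∧
  (∀ x ∈ Ω, ∀ t : ℝ,
    HasDerivAt (fun s => u x s) (lap (fun y => u y t) x + f (u x t) - k * u x t * v x t) t ∧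
    HasDerivAt (fun s => v x s) (lap (fun y => v y t) x + g (v x t) - α * k * u x t * v x t) t) ∧
  (∀ x ∈ frontier Ω, ∀ t : ℝ, u x t = m1 x ∧ v x t = m2 x)

/-- `w` is a solution of the stationary limit problem `(S)`:
`Δw + h(w) = 0` in `Ω`, `w = α m₁ − m₂` on `∂Ω`. -/
def IsSolS {N : ℕ} (Ω : Set (Euc N)) (f g : ℝ → ℝ) (α p : ℝ)
    (m1 m2 : Euc N → ℝ) (w : Euc N → ℝ) : Prop :=
  MemW2p p Ω w ∧ (∀ x ∈ Ω, lap w x + hlim f g α (w x) = 0) ∧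
  ∀ x ∈ frontier Ω, w x = α * m1 x - m2 x

/-- The solution `wt` of `(S)` is non-degenerate: the only `W^{2,p}` solution of the
linearised problem `Δw + h'(wt) w = 0` a.e. in `Ω`, `w = 0` on `∂Ω`, is `w ≡ 0`. -/
def NonDegenS {N : ℕ} (Ω : Set (Euc N)) (f g : ℝ → ℝ) (α p : ℝ) (wt : Euc N → ℝ) : Prop :=
  ∀ w : Euc N → ℝ, MemW2p p Ω w →
    (∀ᵐ x ∂(volume.restrict Ω), lap w x + deriv (hlim f g α) (wt x) * w x = 0) →
    (∀ x ∈ frontier Ω, w x = 0) → ∀ x ∈ Ω, w x = 0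

/-- `(u,v)` is a non-negative stationary solution of `(P_k)`. -/
def IsStatPk {N : ℕ} (Ω : Set (Euc N)) (f g : ℝ → ℝ) (α k : ℝ)
    (m1 m2 : Euc N → ℝ) (u v : Euc N → ℝ) : Prop :=
  ContDiffOn ℝ 2 u Ω ∧ ContDiffOn ℝ 2 v Ω ∧
  ContinuousOn u (closure Ω) ∧ ContinuousOn v (closure Ω) ∧
  (∀ x ∈ closure Ω, 0 ≤ u x ∧ 0 ≤ v x) ∧
  (∀ x ∈ Ω, lap u x + f (u x) - k * u x * v x = 0 ∧
            lap v x + g (v x) - α * k * u x * v x = 0) ∧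
  (∀ x ∈ frontier Ω, u x = m1 x ∧ v x = m2 x)

/-- The `L^q(Ω)` distance between two functions. -/
def LqDist {N : ℕ} (q : ℝ) (Ω : Set (Euc N)) (w1 w2 : Euc N → ℝ) : ENNReal :=
  eLpNorm (fun x => w1 x - w2 x) (ENNReal.ofReal q) (volume.restrict Ω)

/-!
Every solution stays in `[b, a]` and reaches `a` and `b` only at the endpoints (maximum
principle: `h < 0` on `[a, ∞)` and `h > 0` on `(-∞, b]`). At a critical point `x₀` the solution
would be symmetric about `x₀`, by uniqueness for the Lipschitz phase-plane system
`(w, w')' = (w', -h w)`, and so would take the value `a` or `b` inside `(0, 1)`. Hence `w' < 0`,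
and conservation of the energy `w'² / 2 + H w` (with `H' = h`) gives `w' = -√(2 (E - H w))`.
If two solutions had energies `E₁ < E₂`, then `w₁' > w₂'` wherever `w₁ = w₂`, so `w₁ - w₂`
could only cross zero upwards, although it vanishes at both ends. So the energies agree, both phase
trajectories start from `(a, -√(2 (E - H a)))` at `x = 0`, and Grönwall's inequality gives
`w₁ = w₂`.
-/

theorem deriv_deriv_eq_zero_of_isLocalMax_of_isLocalMin {w : ℝ → ℝ} {x : ℝ}
    (hmax : IsLocalMax w x) (hmin : IsLocalMin w x) : deriv (deriv w) x = 0 := by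
  have hconst : w =ᶠ[𝓝 x] fun _ => w x :=
    (hmax.and hmin).mono fun _ hy => le_antisymm hy.1 hy.2
  rw [hconst.deriv.deriv_eq]
  simp

theorem not_isLocalMax_of_deriv_deriv_pos {w : ℝ → ℝ} {x : ℝ} (hc : ContinuousAt w x)
    (hw : 0 < deriv (deriv w) x) : ¬ IsLocalMax w x := fun hmax =>
  hw.ne' <| deriv_deriv_eq_zero_of_isLocalMax_of_isLocalMin hmax
    (isLocalMin_of_deriv_deriv_pos hw hmax.deriv_eq_zero hc)

theorem lt_of_forall_deriv_deriv_pos {w : ℝ → ℝ} {p q c : ℝ} (hc : ContinuousOn w (Icc p q))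
    (hp : w p ≤ c) (hq : w q ≤ c)
    (hw : ∀ x ∈ Ioo p q, c ≤ w x → 0 < deriv (deriv w) x) : ∀ x ∈ Ioo p q, w x < c := by
  intro x hx
  by_contra! hcx
  have hinterior : ∀ y ∈ Ioo p q, IsMaxOn w (Icc p q) y → w y < c := fun y hy hmax => by
    by_contra! hcy
    exact not_isLocalMax_of_deriv_deriv_pos (hc.continuousAt (Icc_mem_nhds hy.1 hy.2))
      (hw y hy hcy) (hmax.isLocalMax (Icc_mem_nhds hy.1 hy.2))
  obtain ⟨x₀, hx₀, hmax⟩ := isCompact_Icc.exists_isMaxOn ⟨x, Ioo_subset_Icc_self hx⟩ hc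
  have hwx₀ : w x ≤ w x₀ := hmax (Ioo_subset_Icc_self hx)
  by_cases hx₀' : x₀ ∈ Ioo p q
  · linarith [hinterior x₀ hx₀' hmax]
  · have hx₀c : w x₀ ≤ c := by
      rcases eq_endpoints_or_mem_Ioo_of_mem_Icc hx₀ with rfl | rfl | h
      exacts [hp, hq, absurd h hx₀']
    have hmax' : IsMaxOn w (Icc p q) x :=
      isMaxOn_iff.2 fun y hy => (isMaxOn_iff.1 hmax y hy).trans (by linarith)
    linarith [hinterior x hx hmax']

theorem lt_of_forall_deriv_deriv_neg {w : ℝ → ℝ} {p q c : ℝ} (hc : ContinuousOn w (Icc p q))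
    (hp : c ≤ w p) (hq : c ≤ w q)
    (hw : ∀ x ∈ Ioo p q, w x ≤ c → deriv (deriv w) x < 0) : ∀ x ∈ Ioo p q, c < w x := by
  have hneg := lt_of_forall_deriv_deriv_pos (w := -w) (c := -c) hc.neg (by simpa) (by simpa)
    fun x hx hcx => by
      simp only [deriv.neg', deriv.fun_neg, Pi.neg_apply] at hcx ⊢
      linarith [hw x hx (by linarith)]
  exact fun x hx => by simpa using hneg x hx

theorem exists_strictMonoOn_of_eventually_deriv_pos {d d' : ℝ → ℝ} {p q z : ℝ}
    (hc : ContinuousOn d (Icc p q)) (hd : ∀ x ∈ Ioo p q, HasDerivAt d (d' x) x)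
    (hev : ∀ᶠ x in 𝓝[Ioo p q] z, 0 < d' x) :
    ∃ ε > 0, StrictMonoOn d (Icc (max p (z - ε)) (min q (z + ε))) := by
  obtain ⟨ε, hε, hball⟩ := Metric.mem_nhdsWithin_iff.1 hev
  refine ⟨ε / 2, half_pos hε, strictMonoOn_of_deriv_pos (convex_Icc _ _)
    (hc.mono (Icc_subset_Icc (le_max_left _ _) (min_le_left _ _))) fun x hx => ?_⟩
  rw [interior_Icc, mem_Ioo, max_lt_iff, lt_min_iff] at hx
  have hxpq : x ∈ Ioo p q := ⟨hx.1.1, hx.2.1⟩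
  rw [(hd x hxpq).deriv]
  refine hball ⟨?_, hxpq⟩
  rw [Metric.mem_ball, Real.dist_eq, abs_lt]
  constructor <;> linarith [hx.1.2, hx.2.2]

theorem not_forall_eventually_deriv_pos {d d' : ℝ → ℝ} {p q : ℝ} (hpq : p < q)
    (hc : ContinuousOn d (Icc p q)) (hd : ∀ x ∈ Ioo p q, HasDerivAt d (d' x) x)
    (hp : d p = 0) (hq : d q = 0) :
    ¬ ∀ z ∈ Icc p q, d z = 0 → ∀ᶠ x in 𝓝[Ioo p q] z, 0 < d' x := by
  intro hzero
  -- Continuous induction gives `0 ≤ d` on `[p, q]`, yet `d` rises strictly into its zero at `q`.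
  have hnonneg : Icc p q ⊆ {x | 0 ≤ d x} := by
    refine IsClosed.Icc_subset_of_forall_mem_nhdsWithin ?_ hp.ge ?_
    · rw [inter_comm]
      exact hc.preimage_isClosed_of_isClosed isClosed_Icc isClosed_Ici
    rintro x ⟨hx0 : 0 ≤ d x, hx⟩
    rcases hx0.lt_or_eq with hpos | hx0
    · have hcx : ContinuousWithinAt d (Ioi x) x :=
        (hc x (Ico_subset_Icc_self hx)).mono_of_mem_nhdsWithin (Icc_mem_nhdsGT_of_mem hx)
      exact mem_of_superset (hcx (Ioi_mem_nhds hpos)) fun _ (hy : 0 < d _) => hy.le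
    · obtain ⟨ε, hε, hmono⟩ := exists_strictMonoOn_of_eventually_deriv_pos hc hd
        (hzero x (Ico_subset_Icc_self hx) hx0.symm)
      have hxJ : x ∈ Icc (max p (x - ε)) (min q (x + ε)) :=
        ⟨max_le hx.1 (by linarith), le_min hx.2.le (by linarith)⟩
      filter_upwards [Ioc_mem_nhdsGT (lt_min hx.2 (by linarith : x < x + ε))] with y hy
      have := hmono hxJ ⟨hxJ.1.trans hy.1.le, hy.2⟩ hy.1
      show 0 ≤ d y
      linarith
  obtain ⟨ε, hε, hmono⟩ := exists_strictMonoOn_of_eventually_deriv_pos hc hd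
    (hzero q (right_mem_Icc.2 hpq.le) hq)
  have hyq : max p (q - ε) < q := max_lt hpq (by linarith)
  have hqε : q ≤ min q (q + ε) := le_min le_rfl (by linarith)
  have hlt := hmono ⟨le_rfl, hyq.le.trans hqε⟩ ⟨hyq.le, hqε⟩ hyq
  have hge : 0 ≤ d (max p (q - ε)) := hnonneg ⟨le_max_left _ _, hyq.le⟩
  linarith

def phaseField (h : ℝ → ℝ) (p : ℝ × ℝ) : ℝ × ℝ := (p.2, -h p.1)

theorem lipschitzOnWith_phaseField {h : ℝ → ℝ} {K : NNReal} {s : Set ℝ}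
    (hK : LipschitzOnWith K h s) : LipschitzOnWith (max 1 K) (phaseField h) (s ×ˢ univ) := by
  have hfst : LipschitzOnWith (K * 1) (fun p : ℝ × ℝ => -h p.1) (s ×ˢ univ) :=
    (hK.comp LipschitzWith.prod_fst.lipschitzOnWith fun _ hp => hp.1).neg
  rw [mul_one] at hfst
  exact LipschitzWith.prod_snd.lipschitzOnWith.prodMk hfst

structure IsDirichletSolution (h : ℝ → ℝ) (a b : ℝ) (w : ℝ → ℝ) : Prop where
  continuousOn : ContinuousOn w (Icc 0 1)
  contDiffOn : ContDiffOn ℝ 2 w (Ioo 0 1)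
  ode : ∀ x ∈ Ioo (0 : ℝ) 1, deriv (deriv w) x + h (w x) = 0
  left : w 0 = a
  right : w 1 = b

namespace IsDirichletSolution

variable {h H : ℝ → ℝ} {a b E x : ℝ} {w w₁ w₂ : ℝ → ℝ}

theorem hasDerivAt (hw : IsDirichletSolution h a b w) (hx : x ∈ Ioo (0 : ℝ) 1) :
    HasDerivAt w (deriv w x) x :=
  ((hw.contDiffOn.differentiableOn two_ne_zero).differentiableAt
    (isOpen_Ioo.mem_nhds hx)).hasDerivAt

theorem hasDerivAt_deriv (hw : IsDirichletSolution h a b w) (hx : x ∈ Ioo (0 : ℝ) 1) :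
    HasDerivAt (deriv w) (-h (w x)) x := by
  have hd : HasDerivAt (deriv w) (deriv (deriv w) x) x :=
    (((hw.contDiffOn.deriv_of_isOpen isOpen_Ioo (m := 1) (by norm_num)).differentiableOn
      one_ne_zero).differentiableAt (isOpen_Ioo.mem_nhds hx)).hasDerivAt
  rwa [eq_neg_of_add_eq_zero_left (hw.ode x hx)] at hd

theorem continuousOn_deriv (hw : IsDirichletSolution h a b w) :
    ContinuousOn (deriv w) (Ioo 0 1) :=
  HasDerivAt.continuousOn fun _ hx => hw.hasDerivAt_deriv hx

theorem lt_left (hw : IsDirichletSolution h a b w) (hba : b ≤ a) (ha : ∀ t ≥ a, h t < 0) :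
    ∀ x ∈ Ioo (0 : ℝ) 1, w x < a :=
  lt_of_forall_deriv_deriv_pos hw.continuousOn hw.left.le (hw.right.trans_le hba)
    fun x hx hax => by linarith [hw.ode x hx, ha _ hax]

theorem right_lt (hw : IsDirichletSolution h a b w) (hba : b ≤ a) (hb : ∀ t ≤ b, 0 < h t) :
    ∀ x ∈ Ioo (0 : ℝ) 1, b < w x :=
  lt_of_forall_deriv_deriv_neg hw.continuousOn (hw.left.symm ▸ hba) hw.right.ge
    fun x hx hxb => by linarith [hw.ode x hx, hb _ hxb]

theorem mem_Icc (hw : IsDirichletSolution h a b w) (hba : b ≤ a) (ha : ∀ t ≥ a, h t < 0)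
    (hb : ∀ t ≤ b, 0 < h t) : ∀ x ∈ Icc (0 : ℝ) 1, w x ∈ Icc b a := by
  intro x hx
  rcases eq_endpoints_or_mem_Ioo_of_mem_Icc hx with rfl | rfl | hx
  · exact ⟨hw.left ▸ hba, hw.left.le⟩
  · exact ⟨hw.right.ge, hw.right ▸ hba⟩
  · exact ⟨(hw.right_lt hba hb x hx).le, (hw.lt_left hba ha x hx).le⟩

theorem hasDerivAt_phase (hw : IsDirichletSolution h a b w) (hx : x ∈ Ioo (0 : ℝ) 1) :
    HasDerivAt (fun t => (w t, deriv w t)) (phaseField h (w x, deriv w x)) x :=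
  (hw.hasDerivAt hx).prodMk (hw.hasDerivAt_deriv hx)

theorem hasDerivAt_phase_reflect (hw : IsDirichletSolution h a b w) {x₀ t : ℝ}
    (ht : 2 * x₀ - t ∈ Ioo (0 : ℝ) 1) :
    HasDerivAt (fun t => (w (2 * x₀ - t), -deriv w (2 * x₀ - t)))
      (phaseField h (w (2 * x₀ - t), -deriv w (2 * x₀ - t))) t := by
  have hσ : HasDerivAt (fun t : ℝ => 2 * x₀ - t) (-1) t := (hasDerivAt_id t).const_sub _
  have h1 := (hw.hasDerivAt ht).comp t hσ
  have h2 := ((hw.hasDerivAt_deriv ht).comp t hσ).neg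
  simp only [mul_neg_one, neg_neg] at h1 h2
  exact h1.prodMk h2

theorem eqOn_reflect (hw : IsDirichletSolution h a b w) {K : NNReal}
    (hK : LipschitzOnWith K h (Icc b a)) (hmem : ∀ x ∈ Icc (0 : ℝ) 1, w x ∈ Icc b a)
    {x₀ r : ℝ} (hx₀ : deriv w x₀ = 0) (hx₀r : x₀ < r) (hr : r ≤ 1) (hl : 0 ≤ 2 * x₀ - r) :
    EqOn (fun t => w (2 * x₀ - t)) w (Icc (2 * x₀ - r) r) := by
  have hsub : Icc (2 * x₀ - r) r ⊆ Icc 0 1 := Icc_subset_Icc hl hr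
  have hIoo : Ioo (2 * x₀ - r) r ⊆ Ioo 0 1 := Ioo_subset_Ioo hl hr
  have hrefl : MapsTo (fun t => 2 * x₀ - t) (Icc (2 * x₀ - r) r) (Icc (2 * x₀ - r) r) :=
    fun t ht => ⟨by linarith [ht.2], by linarith [ht.1]⟩
  have hrefl' : MapsTo (fun t => 2 * x₀ - t) (Ioo (2 * x₀ - r) r) (Ioo (2 * x₀ - r) r) :=
    fun t ht => ⟨by linarith [ht.2], by linarith [ht.1]⟩
  have heq := ODE_solution_unique_of_mem_Ioo (fun _ _ => lipschitzOnWith_phaseField hK)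
    (⟨by linarith, hx₀r⟩ : x₀ ∈ Ioo (2 * x₀ - r) r)
    (fun t ht => ⟨hw.hasDerivAt_phase_reflect (hIoo (hrefl' ht)),
      hmem _ (hsub (hrefl (Ioo_subset_Icc_self ht))), trivial⟩)
    (fun t ht => ⟨hw.hasDerivAt_phase (hIoo ht), hmem t (hsub (Ioo_subset_Icc_self ht)),
      trivial⟩)
    (by simp [hx₀, show 2 * x₀ - x₀ = x₀ by ring])
  exact EqOn.of_subset_closure (fun t ht => congrArg Prod.fst (heq ht))
    (hw.continuousOn.comp (continuousOn_const.sub continuousOn_id) fun t ht => hsub (hrefl ht))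
    (hw.continuousOn.mono hsub) Ioo_subset_Icc_self (by rw [closure_Ioo (by linarith)])

theorem deriv_ne_zero (hw : IsDirichletSolution h a b w) {K : NNReal}
    (hK : LipschitzOnWith K h (Icc b a)) (hba : b < a) (ha : ∀ t ≥ a, h t < 0)
    (hb : ∀ t ≤ b, 0 < h t) : ∀ x ∈ Ioo (0 : ℝ) 1, deriv w x ≠ 0 := by
  intro x₀ hx₀ hcrit
  have hmem := hw.mem_Icc hba.le ha hb
  rcases le_or_gt (2 * x₀) 1 with hle | hgt
  · have hsym := hw.eqOn_reflect hK hmem hcrit (r := 2 * x₀) (by linarith [hx₀.1]) hle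
      (by linarith) ⟨by linarith [hx₀.1], le_rfl⟩
    simp only [sub_self, hw.left] at hsym
    rcases hle.eq_or_lt with h1 | h1
    · rw [h1, hw.right] at hsym
      exact hba.ne hsym.symm
    · exact (hw.lt_left hba.le ha _ ⟨by linarith [hx₀.1], h1⟩).ne' hsym
  · have hsym := hw.eqOn_reflect hK hmem hcrit (r := 1) hx₀.2 le_rfl (by linarith)
      ⟨by linarith [hx₀.2], le_rfl⟩
    simp only [hw.right] at hsym
    exact (hw.right_lt hba.le hb (2 * x₀ - 1) ⟨by linarith, by linarith [hx₀.2]⟩).ne' hsym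

theorem deriv_neg (hw : IsDirichletSolution h a b w) {K : NNReal}
    (hK : LipschitzOnWith K h (Icc b a)) (hba : b < a) (ha : ∀ t ≥ a, h t < 0)
    (hb : ∀ t ≤ b, 0 < h t) : ∀ x ∈ Ioo (0 : ℝ) 1, deriv w x < 0 := by
  intro x hx
  obtain ⟨ξ, hξ, hslope⟩ := exists_deriv_eq_slope w zero_lt_one hw.continuousOn
    fun y hy => (hw.hasDerivAt hy).differentiableAt.differentiableWithinAt
  have hξneg : deriv w ξ < 0 := by
    rw [hslope, hw.left, hw.right]
    linarith
  by_contra! hx0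
  obtain ⟨z, hz, hz0⟩ :=
    isPreconnected_Ioo.intermediate_value hξ hx hw.continuousOn_deriv ⟨hξneg.le, hx0⟩
  exact hw.deriv_ne_zero hK hba ha hb z hz hz0

theorem exists_energy (hw : IsDirichletSolution h a b w) (hH : ∀ t, HasDerivAt H (h t) t) :
    ∃ E, ∀ x ∈ Ioo (0 : ℝ) 1, deriv w x ^ 2 / 2 + H (w x) = E := by
  have hE : ∀ x ∈ Ioo (0 : ℝ) 1, HasDerivAt (fun x => deriv w x ^ 2 / 2 + H (w x)) 0 x := by
    intro x hx
    refine ((((hw.hasDerivAt_deriv hx).fun_pow 2).div_const 2).add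
      ((hH (w x)).comp x (hw.hasDerivAt hx))).congr_deriv ?_
    push_cast
    ring
  exact isOpen_Ioo.exists_is_const_of_deriv_eq_zero isPreconnected_Ioo
    (fun x hx => (hE x hx).differentiableAt.differentiableWithinAt) fun x hx => (hE x hx).deriv

theorem exists_deriv_eq_neg_sqrt (hw : IsDirichletSolution h a b w)
    (hH : ∀ t, HasDerivAt H (h t) t) (hneg : ∀ x ∈ Ioo (0 : ℝ) 1, deriv w x < 0) :
    ∃ E, (∀ x ∈ Ioo (0 : ℝ) 1, deriv w x = -√(2 * (E - H (w x)))) ∧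
      ∀ x ∈ Icc (0 : ℝ) 1, H (w x) ≤ E := by
  obtain ⟨E, hE⟩ := hw.exists_energy hH
  have hHc : Continuous H := continuous_iff_continuousAt.2 fun t => (hH t).continuousAt
  refine ⟨E, fun x hx => ?_, fun x hx => ?_⟩
  · rw [show 2 * (E - H (w x)) = deriv w x ^ 2 by linarith [hE x hx], Real.sqrt_sq_eq_abs,
      abs_of_neg (hneg x hx), neg_neg]
  · rw [← closure_Ioo zero_ne_one] at hx
    refine le_on_closure (f := fun y => H (w y)) (fun y hy => ?_) ?_ continuousOn_const hx
    · nlinarith [hE y hy, sq_nonneg (deriv w y)]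
    · rw [closure_Ioo zero_ne_one]
      exact hHc.comp_continuousOn hw.continuousOn

theorem tendsto_deriv (hw : IsDirichletSolution h a b w) (hH : Continuous H)
    (hE : ∀ x ∈ Ioo (0 : ℝ) 1, deriv w x = -√(2 * (E - H (w x)))) {z : ℝ}
    (hz : z ∈ Icc (0 : ℝ) 1) :
    Tendsto (deriv w) (𝓝[Ioo 0 1] z) (𝓝 (-√(2 * (E - H (w z))))) := by
  have hwz : Tendsto w (𝓝[Ioo 0 1] z) (𝓝 (w z)) :=
    (hw.continuousOn z hz).mono_left (nhdsWithin_mono _ Ioo_subset_Icc_self)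
  have hF : Continuous fun u => -√(2 * (E - H u)) := by fun_prop
  exact ((hF.tendsto _).comp hwz).congr'
    (eventually_nhdsWithin_of_forall fun x hx => (hE x hx).symm)

theorem energy_not_lt {E₁ E₂ : ℝ} (hw₁ : IsDirichletSolution h a b w₁)
    (hw₂ : IsDirichletSolution h a b w₂) (hH : Continuous H)
    (hE₁ : ∀ x ∈ Ioo (0 : ℝ) 1, deriv w₁ x = -√(2 * (E₁ - H (w₁ x))))
    (hE₂ : ∀ x ∈ Ioo (0 : ℝ) 1, deriv w₂ x = -√(2 * (E₂ - H (w₂ x))))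
    (hHE₁ : ∀ x ∈ Icc (0 : ℝ) 1, H (w₁ x) ≤ E₁) : ¬ E₁ < E₂ := by
  intro hlt
  refine not_forall_eventually_deriv_pos zero_lt_one (hw₁.continuousOn.sub hw₂.continuousOn)
    (fun x hx => (hw₁.hasDerivAt hx).sub (hw₂.hasDerivAt hx))
    (by simp [hw₁.left, hw₂.left]) (by simp [hw₁.right, hw₂.right]) fun z hz hdz => ?_
  have hsqrt : √(2 * (E₁ - H (w₁ z))) < √(2 * (E₂ - H (w₁ z))) :=
    Real.sqrt_lt_sqrt (by linarith [hHE₁ z hz]) (by linarith)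
  have hlim := (hw₁.tendsto_deriv hH hE₁ hz).sub (hw₂.tendsto_deriv hH hE₂ hz)
  rw [← sub_eq_zero.1 hdz] at hlim
  exact hlim.eventually (eventually_gt_nhds (by linarith))

theorem tendsto_phase_zero (hw : IsDirichletSolution h a b w) (hH : Continuous H)
    (hE : ∀ x ∈ Ioo (0 : ℝ) 1, deriv w x = -√(2 * (E - H (w x)))) :
    Tendsto (fun t => (w t, deriv w t)) (𝓝[>] 0) (𝓝 (a, -√(2 * (E - H a)))) := by
  have h0 : (0 : ℝ) ∈ Icc 0 1 := left_mem_Icc.2 zero_le_one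
  have hle : 𝓝[>] (0 : ℝ) ≤ 𝓝[Ioo 0 1] 0 := nhdsWithin_le_of_mem (Ioo_mem_nhdsGT one_pos)
  have hderiv := hw.tendsto_deriv hH hE h0
  have hw0 := (hw.continuousOn 0 h0).mono_left (nhdsWithin_mono _ Ioo_subset_Icc_self)
  rw [hw.left] at hderiv hw0
  exact (hw0.prodMk_nhds hderiv).mono_left hle

theorem eqOn_of_energy_eq (hw₁ : IsDirichletSolution h a b w₁)
    (hw₂ : IsDirichletSolution h a b w₂) {K : NNReal} (hK : LipschitzOnWith K h (Icc b a))
    (hmem₁ : ∀ x ∈ Icc (0 : ℝ) 1, w₁ x ∈ Icc b a) (hmem₂ : ∀ x ∈ Icc (0 : ℝ) 1, w₂ x ∈ Icc b a)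
    (hH : Continuous H) (hE₁ : ∀ x ∈ Ioo (0 : ℝ) 1, deriv w₁ x = -√(2 * (E - H (w₁ x))))
    (hE₂ : ∀ x ∈ Ioo (0 : ℝ) 1, deriv w₂ x = -√(2 * (E - H (w₂ x)))) :
    EqOn w₁ w₂ (Icc 0 1) := by
  intro x hx
  rcases eq_endpoints_or_mem_Ioo_of_mem_Icc hx with rfl | rfl | hx
  · rw [hw₁.left, hw₂.left]
  · rw [hw₁.right, hw₂.right]
  -- The phase trajectories are only known on `(0, 1)`: apply Grönwall on `[ε, x]`, let `ε → 0⁺`.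
  have hgronwall : ∀ ε ∈ Ioo 0 x, dist (w₁ x, deriv w₁ x) (w₂ x, deriv w₂ x) ≤
      dist (w₁ ε, deriv w₁ ε) (w₂ ε, deriv w₂ ε) * Real.exp (max 1 K * (x - ε)) := by
    intro ε hε
    have hsub : Icc ε x ⊆ Ioo 0 1 := Icc_subset_Ioo hε.1 hx.2
    have hsub' : Ico ε x ⊆ Icc 0 1 := Ico_subset_Icc_self.trans (hsub.trans Ioo_subset_Icc_self)
    exact dist_le_of_trajectories_ODE_of_mem (v := fun _ => phaseField h)
      (s := fun _ => Icc b a ×ˢ univ) (fun _ _ => lipschitzOnWith_phaseField hK)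
      (HasDerivAt.continuousOn fun t ht => hw₁.hasDerivAt_phase (hsub ht))
      (fun t ht => (hw₁.hasDerivAt_phase (hsub (Ico_subset_Icc_self ht))).hasDerivWithinAt)
      (fun t ht => ⟨hmem₁ t (hsub' ht), trivial⟩)
      (HasDerivAt.continuousOn fun t ht => hw₂.hasDerivAt_phase (hsub ht))
      (fun t ht => (hw₂.hasDerivAt_phase (hsub (Ico_subset_Icc_self ht))).hasDerivWithinAt)
      (fun t ht => ⟨hmem₂ t (hsub' ht), trivial⟩) le_rfl x ⟨hε.2.le, le_rfl⟩
  have hexp : Tendsto (fun ε => Real.exp (max 1 K * (x - ε))) (𝓝[>] 0)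
      (𝓝 (Real.exp (max 1 K * (x - 0)))) :=
    ((by fun_prop : Continuous fun ε => Real.exp (max 1 K * (x - ε))).tendsto 0).mono_left
      nhdsWithin_le_nhds
  have hlim := ((hw₁.tendsto_phase_zero hH hE₁).dist (hw₂.tendsto_phase_zero hH hE₂)).mul hexp
  rw [dist_self, zero_mul] at hlim
  have hdist := ge_of_tendsto hlim (mem_of_superset (Ioo_mem_nhdsGT hx.1) hgronwall)
  exact congrArg Prod.fst (dist_le_zero.1 hdist)

theorem eqOn (hh : Continuous h) {K : NNReal} (hK : LipschitzOnWith K h (Icc b a))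
    (ha : ∀ t ≥ a, h t < 0) (hb : ∀ t ≤ b, 0 < h t) (hw₁ : IsDirichletSolution h a b w₁)
    (hw₂ : IsDirichletSolution h a b w₂) : EqOn w₁ w₂ (Icc 0 1) := by
  have hba : b < a := lt_of_not_ge fun hab => (ha b hab).not_gt (hb b le_rfl)
  obtain ⟨H, hH⟩ : ∃ H : ℝ → ℝ, ∀ t, HasDerivAt H (h t) t :=
    ⟨fun t => ∫ s in (0 : ℝ)..t, h s, fun t => (hh.integral_hasStrictDerivAt 0 t).hasDerivAt⟩
  have hHc : Continuous H := continuous_iff_continuousAt.2 fun t => (hH t).continuousAt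
  obtain ⟨E₁, hE₁, hHE₁⟩ := hw₁.exists_deriv_eq_neg_sqrt hH (hw₁.deriv_neg hK hba ha hb)
  obtain ⟨E₂, hE₂, hHE₂⟩ := hw₂.exists_deriv_eq_neg_sqrt hH (hw₂.deriv_neg hK hba ha hb)
  obtain rfl : E₁ = E₂ := le_antisymm (not_lt.1 (energy_not_lt hw₂ hw₁ hHc hE₂ hE₁ hHE₂))
    (not_lt.1 (energy_not_lt hw₁ hw₂ hHc hE₁ hE₂ hHE₁))
  exact eqOn_of_energy_eq hw₁ hw₂ hK (hw₁.mem_Icc hba.le ha hb) (hw₂.mem_Icc hba.le ha hb) hHc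
    hE₁ hE₂

end IsDirichletSolution

section hlim

variable {f g : ℝ → ℝ} {α : ℝ}

theorem continuous_hlim (hf : ContinuousOn f (Ici 0)) (hg : ContinuousOn g (Ici 0))
    (hα : 0 ≤ α) : Continuous (hlim f g α) :=
  (continuous_const.mul (hf.comp_continuous (by fun_prop)
    fun _ => mul_nonneg (inv_nonneg.2 hα) (le_max_right _ _))).sub
    (hg.comp_continuous (by fun_prop) fun w =>
      show 0 ≤ -min w 0 from neg_nonneg.2 (min_le_right _ _))

theorem lipschitzOnWith_hlim (hf : ContDiffOn ℝ 1 f (Ici 0)) (hg : ContDiffOn ℝ 1 g (Ici 0))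
    (hα : 0 ≤ α) (b a : ℝ) : ∃ K, LipschitzOnWith K (hlim f g α) (Icc b a) := by
  obtain ⟨Kf, hKf⟩ := ((contDiffOn_const.mul hf).mono
    (Icc_subset_Ici_self : Icc 0 (α⁻¹ * max a 0) ⊆ Ici 0)).exists_lipschitzOnWith one_ne_zero
    (convex_Icc _ _) isCompact_Icc
  obtain ⟨Kg, hKg⟩ := (hg.mono (Icc_subset_Ici_self : Icc 0 (-min b 0) ⊆ Ici 0)
    ).exists_lipschitzOnWith one_ne_zero (convex_Icc _ _) isCompact_Icc
  have hpos : LipschitzWith (‖α⁻¹‖₊ * 1) fun w : ℝ => α⁻¹ * max w 0 :=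
    (lipschitzWith_smul α⁻¹).comp (LipschitzWith.id.max_const 0)
  have hneg : LipschitzWith 1 fun w : ℝ => -min w 0 := (LipschitzWith.id.min_const 0).neg
  refine ⟨_, (hKf.comp hpos.lipschitzOnWith fun w hw => ?_).sub
    (hKg.comp hneg.lipschitzOnWith fun w hw => ?_)⟩
  · exact ⟨mul_nonneg (inv_nonneg.2 hα) (le_max_right _ _),
      mul_le_mul_of_nonneg_left (max_le_max_right 0 hw.2) (inv_nonneg.2 hα)⟩
  · exact ⟨neg_nonneg.2 (min_le_right _ _), neg_le_neg (min_le_min_right 0 hw.1)⟩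

theorem hlim_neg (hg0 : g 0 = 0) (hfneg : ∀ s > (1 : ℝ), f s < 0) (hα : 0 < α) {t : ℝ}
    (ht : α < t) : hlim f g α t < 0 := by
  have ht0 : 0 < t := hα.trans ht
  rw [hlim, max_eq_left ht0.le, min_eq_right ht0.le, neg_zero, hg0, sub_zero]
  exact mul_neg_of_pos_of_neg hα (hfneg _ (by rwa [← div_eq_inv_mul, gt_iff_lt, one_lt_div hα]))

theorem hlim_pos (hf0 : f 0 = 0) (hgneg : ∀ s > (1 : ℝ), g s < 0) {t : ℝ} (ht : t < -1) :
    0 < hlim f g α t := by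
  have ht0 : t < 0 := by linarith
  rw [hlim, max_eq_right ht0.le, min_eq_left ht0.le, mul_zero, hf0, mul_zero, zero_sub,
    neg_pos]
  exact hgneg _ (by linarith)

end hlim

theorem stmt_15_general (f g : ℝ → ℝ)
    (hf : ContDiffOn ℝ 1 f (Ici (0 : ℝ))) (hg : ContDiffOn ℝ 1 g (Ici (0 : ℝ)))
    (hf0 : f 0 = 0) (hg0 : g 0 = 0)
    (hfneg : ∀ s > (1 : ℝ), f s < 0) (hgneg : ∀ s > (1 : ℝ), g s < 0)
    (α a b : ℝ) (hα : 0 < α) (ha : max 1 α < a) (hb : b < -1)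
    (w1 w2 : ℝ → ℝ)
    (h1c : ContinuousOn w1 (Icc 0 1)) (h1d : ContDiffOn ℝ 2 w1 (Ioo 0 1))
    (h1eq : ∀ x ∈ Ioo (0 : ℝ) 1, deriv (deriv w1) x + hlim f g α (w1 x) = 0)
    (h10 : w1 0 = a) (h11 : w1 1 = b)
    (h2c : ContinuousOn w2 (Icc 0 1)) (h2d : ContDiffOn ℝ 2 w2 (Ioo 0 1))
    (h2eq : ∀ x ∈ Ioo (0 : ℝ) 1, deriv (deriv w2) x + hlim f g α (w2 x) = 0)
    (h20 : w2 0 = a) (h21 : w2 1 = b) :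
    EqOn w1 w2 (Icc 0 1) := by
  obtain ⟨K, hK⟩ := lipschitzOnWith_hlim hf hg hα.le b a
  have hαa : α < a := (le_max_right 1 α).trans_lt ha
  exact IsDirichletSolution.eqOn (continuous_hlim hf.continuousOn hg.continuousOn hα.le) hK
    (fun t ht => hlim_neg hg0 hfneg hα (hαa.trans_le ht))
    (fun t ht => hlim_pos hf0 hgneg (ht.trans_lt hb))
    ⟨h1c, h1d, h1eq, h10, h11⟩ ⟨h2c, h2d, h2eq, h20, h21⟩

/-- Section 6, 1-D uniqueness: if `a > max{1,α}` and `b < −1`, there is at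
most one `w`, continuous on `[0,1]` and C² on `(0,1)`, with `w'' + h(w) = 0` on `(0,1)`,
`w(0) = a`, `w(1) = b`. -/
theorem stmt_15 (f g : ℝ → ℝ)
    (hf : ContDiffOn ℝ 1 f (Ici (0 : ℝ))) (hg : ContDiffOn ℝ 1 g (Ici (0 : ℝ)))
    (hf0 : f 0 = 0) (hg0 : g 0 = 0)
    (hfpos : ∀ s ∈ Ioo (0 : ℝ) 1, 0 < f s) (hgpos : ∀ s ∈ Ioo (0 : ℝ) 1, 0 < g s)
    (hfneg : ∀ s > (1 : ℝ), f s < 0) (hgneg : ∀ s > (1 : ℝ), g s < 0)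
    (α a b : ℝ) (hα : 0 < α) (ha : max 1 α < a) (hb : b < -1)
    (w1 w2 : ℝ → ℝ)
    (h1c : ContinuousOn w1 (Icc 0 1)) (h1d : ContDiffOn ℝ 2 w1 (Ioo 0 1))
    (h1eq : ∀ x ∈ Ioo (0 : ℝ) 1, deriv (deriv w1) x + hlim f g α (w1 x) = 0)
    (h10 : w1 0 = a) (h11 : w1 1 = b)
    (h2c : ContinuousOn w2 (Icc 0 1)) (h2d : ContDiffOn ℝ 2 w2 (Ioo 0 1))
    (h2eq : ∀ x ∈ Ioo (0 : ℝ) 1, deriv (deriv w2) x + hlim f g α (w2 x) = 0)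
    (h20 : w2 0 = a) (h21 : w2 1 = b) :
    EqOn w1 w2 (Icc 0 1) :=
  stmt_15_general f g hf hg hf0 hg0 hfneg hgneg α a b hα ha hb w1 w2 h1c h1d h1eq h10 h11 h2c h2d
    h2eq h20 h21
end
end

section
/- Let α > 0, M > 0, and let z : ℝ → ℝ be a Lipschitz function with 0 ≤ z(t) ≤ M for all t ∈ ℝ, such that for every t ∈ ℝ, limsup_{h → 0⁺} (z(t) − z(t−h))/h ≤ −α z(t)². Then z(t) = 0 for all t ∈ ℝ. -/
open MeasureTheory Metric Set Filter Topology

noncomputable section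

lemma stmt18_slope (α : ℝ) (z : ℝ → ℝ) (K : NNReal) (hz : LipschitzWith K z)
    (hineq : ∀ t : ℝ,
      Filter.limsup (fun h : ℝ => (z t - z (t - h)) / h) (𝓝[>] (0 : ℝ)) ≤ -α * z t ^ 2)
    (v x r : ℝ) (hr : -α * z (v - x) ^ 2 < r) :
    ∀ᶠ y in 𝓝[>] x, slope (fun s => -z (v - s)) x y < r := by
  set τ := v - x with hτ
  have habs : ∀ h : ℝ, 0 < h → |z τ - z (τ - h)| ≤ (K : ℝ) * h := by
    intro h hh
    have := hz.dist_le_mul τ (τ - h)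
    rw [Real.dist_eq, Real.dist_eq] at this
    simpa [abs_of_pos hh] using this
  have hbd : Filter.IsBoundedUnder (· ≤ ·) (𝓝[>] (0 : ℝ))
      (fun h : ℝ => (z τ - z (τ - h)) / h) := by
    refine ⟨(K : ℝ), Filter.eventually_map.2 ?_⟩
    filter_upwards [self_mem_nhdsWithin] with h (hh : (0:ℝ) < h)
    rw [div_le_iff₀ hh]
    have := (abs_le.1 (habs h hh)).2
    linarith
  have hev : ∀ᶠ h in 𝓝[>] (0 : ℝ), (z τ - z (τ - h)) / h < r :=
    Filter.eventually_lt_of_limsup_lt (lt_of_le_of_lt (hineq τ) hr) hbd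
  have htend : Filter.Tendsto (fun y : ℝ => y - x) (𝓝[>] x) (𝓝[>] (0 : ℝ)) := by
    apply tendsto_nhdsWithin_of_tendsto_nhds_of_eventually_within
    · have : Filter.Tendsto (fun y : ℝ => y - x) (𝓝 x) (𝓝 (x - x)) :=
        (continuous_id.sub continuous_const).tendsto x
      rw [sub_self] at this
      exact this.mono_left nhdsWithin_le_nhds
    · filter_upwards [self_mem_nhdsWithin] with y (hy : x < y)
      simpa [Set.mem_Ioi] using sub_pos.2 hy
  filter_upwards [htend.eventually hev, self_mem_nhdsWithin] with y hy (hxy : x < y)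
  have heq : slope (fun s => -z (v - s)) x y = (z τ - z (τ - (y - x))) / (y - x) := by
    rw [slope_def_field]
    have h1 : τ - (y - x) = v - y := by ring
    rw [h1]
    ring
  rw [heq]
  exact hy


/-- differential inequality in Lemma 4: a Lipschitz `z : ℝ → ℝ` with
`0 ≤ z ≤ M` and `limsup_{h→0⁺} (z(t) − z(t−h))/h ≤ −α z(t)²` for all `t` vanishes
identically. -/
theorem stmt_18 (α M : ℝ) (hα : 0 < α) (hM : 0 < M)
    (z : ℝ → ℝ) (K : NNReal) (hz : LipschitzWith K z)
    (hbd : ∀ t, z t ∈ Icc (0 : ℝ) M)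
    (hineq : ∀ t : ℝ,
      Filter.limsup (fun h : ℝ => (z t - z (t - h)) / h) (𝓝[>] (0 : ℝ)) ≤ -α * z t ^ 2) :
    ∀ t, z t = 0 := by
  have hcont : Continuous z := hz.continuous
  -- Step B: z is non-increasing
  have mono : ∀ u v : ℝ, u ≤ v → z v ≤ z u := by
    intro u v huv
    have hf : ContinuousOn (fun s => -z (v - s)) (Icc (0:ℝ) (v - u)) := by fun_prop
    have hB' : ∀ x ∈ Ico (0:ℝ) (v - u),
        HasDerivWithinAt (fun _ : ℝ => -z (v - 0)) ((fun _ : ℝ => (0:ℝ)) x) (Ici x) x :=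
      fun x _ => hasDerivWithinAt_const _ _ _
    have bound : ∀ x ∈ Ico (0:ℝ) (v - u), ∀ r, (0:ℝ) < r →
        ∃ᶠ y in 𝓝[>] x, slope (fun s => -z (v - s)) x y < r := by
      intro x _ r hr
      have h1 : -α * z (v - x) ^ 2 < r :=
        lt_of_le_of_lt (by nlinarith [sq_nonneg (z (v - x))]) hr
      exact (stmt18_slope α z K hz hineq v x r h1).frequently
    have key := image_le_of_liminf_slope_right_le_deriv_boundary hf le_rfl
      continuousOn_const hB' bound (x := v - u) ⟨by linarith, le_rfl⟩
    simp only [sub_sub_cancel, sub_zero] at key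
    linarith
  intro t
  have h0 := (hbd t).1
  by_contra hne
  have hc : 0 < z t := lt_of_le_of_ne h0 (Ne.symm hne)
  set c := z t with hcdef
  set b := M / (α * c ^ 2) with hb
  have hb0 : 0 < b := div_pos hM (by positivity)
  -- Step C: linear comparison backward in time
  have hf : ContinuousOn (fun s => -z (t - s)) (Icc (0:ℝ) b) := by fun_prop
  have ha : -z (t - 0) ≤ -c + (-(α * c ^ 2)) * 0 := by simp [hcdef]
  have hBc : ContinuousOn (fun x : ℝ => -c + (-(α * c ^ 2)) * x) (Icc (0:ℝ) b) := by fun_prop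
  have hB' : ∀ x ∈ Ico (0:ℝ) b,
      HasDerivWithinAt (fun x : ℝ => -c + (-(α * c ^ 2)) * x)
        ((fun _ : ℝ => -(α * c ^ 2)) x) (Ici x) x := by
    intro x _
    simpa using ((hasDerivWithinAt_id x (Ici x)).const_mul (-(α * c ^ 2))).const_add (-c)
  have bound : ∀ x ∈ Ico (0:ℝ) b, ∀ r, -(α * c ^ 2) < r →
      ∃ᶠ y in 𝓝[>] x, slope (fun s => -z (t - s)) x y < r := by
    intro x hx r hr
    have hzc : c ≤ z (t - x) := by
      have := mono (t - x) t (by linarith [hx.1])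
      linarith
    have hsq : c ^ 2 ≤ z (t - x) ^ 2 := by nlinarith
    have h1 : -α * z (t - x) ^ 2 < r := by nlinarith [mul_nonneg hα.le (sub_nonneg.2 hsq)]
    exact (stmt18_slope α z K hz hineq t x r h1).frequently
  have key := image_le_of_liminf_slope_right_le_deriv_boundary hf ha hBc hB' bound
    (x := b) ⟨hb0.le, le_rfl⟩
  have h3 : α * c ^ 2 * b = M := by
    rw [hb]; field_simp
  have h4 : z (t - b) ≤ M := (hbd (t - b)).2
  nlinarith
end
end

section
/- Let c > 0 and let z : ℝ → ℝ be a bounded Lipschitz function such that for every t ∈ ℝ, limsup_{h → 0⁺} (z(t) − z(t−h))/h ≤ −c z(t). Then z(t) ≤ 0 for all t ∈ ℝ. -/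
open MeasureTheory Metric Set Filter Topology

noncomputable section

/-! Reflecting time, `g s = -z (-s)` satisfies the forward inequality `D⁺g ≤ c g`, so Grönwall's
inequality gives `z s ≥ z t * exp (c (t - s))` for `s ≤ t`: a positive value of `z` would force
`z` to grow exponentially into the past, against its boundedness. -/

theorem LipschitzWith.isBoundedUnder_le_slope_left {f : ℝ → ℝ} {K : NNReal}
    (hf : LipschitzWith K f) (t : ℝ) :
    IsBoundedUnder (· ≤ ·) (𝓝[>] 0) (fun h : ℝ => (f t - f (t - h)) / h) := by
  refine ⟨K, eventually_nhdsWithin_of_forall fun h (hh : 0 < h) => ?_⟩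
  have hlip := hf.dist_le_mul t (t - h)
  rw [Real.dist_eq, Real.dist_eq, sub_sub_cancel, abs_of_pos hh] at hlip
  exact (div_le_iff₀ hh).2 ((le_abs_self _).trans hlip)

theorem frequently_slope_right_neg_comp_neg_lt {f : ℝ → ℝ} {x r : ℝ}
    (hbdd : IsBoundedUnder (· ≤ ·) (𝓝[>] 0) (fun h : ℝ => (f (-x) - f (-x - h)) / h))
    (hr : limsup (fun h : ℝ => (f (-x) - f (-x - h)) / h) (𝓝[>] 0) < r) :
    ∃ᶠ y in 𝓝[>] x, (y - x)⁻¹ * (-f (-y) - -f (-x)) < r := by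
  have hshift : Tendsto (· - x) (𝓝[>] x) (𝓝[>] 0) := by
    rw [Tendsto, map_subRight_nhdsGT, sub_self]
  refine (hshift.eventually (eventually_lt_of_limsup_lt hr hbdd)).frequently.mono fun y hy => ?_
  rw [show -x - (y - x) = -y by ring] at hy
  rwa [inv_mul_eq_div, neg_sub_neg]

open Real in
theorem LipschitzWith.mul_exp_le_of_limsup_slope_left_le {f : ℝ → ℝ} {K : NNReal}
    (hf : LipschitzWith K f) {c : ℝ}
    (hineq : ∀ t, limsup (fun h : ℝ => (f t - f (t - h)) / h) (𝓝[>] 0) ≤ -c * f t)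
    {s t : ℝ} (hst : s ≤ t) : f t * exp (c * (t - s)) ≤ f s := by
  have hslope (x : ℝ) (r : ℝ) (hr : c * -f (-x) < r) :
      ∃ᶠ y in 𝓝[>] x, (y - x)⁻¹ * (-f (-y) - -f (-x)) < r :=
    frequently_slope_right_neg_comp_neg_lt (hf.isBoundedUnder_le_slope_left _)
      ((hineq (-x)).trans_lt (by linarith))
  have hgronwall := le_gronwallBound_of_liminf_deriv_right_le (f := fun x => -f (-x))
    (f' := fun x => c * -f (-x)) (δ := -f t) (K := c) (ε := 0) (b := -s)
    (hf.continuous.comp continuous_neg).neg.continuousOn (fun x _ => hslope x)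
    (by rw [neg_neg]) (fun x _ => (add_zero _).ge) (-s) ⟨neg_le_neg hst, le_rfl⟩
  rw [gronwallBound_ε0, neg_neg, neg_sub_neg, neg_mul] at hgronwall
  exact neg_le_neg_iff.1 hgronwall

/-- differential inequality in Lemma 7: a bounded Lipschitz `z : ℝ → ℝ`
with `limsup_{h→0⁺} (z(t) − z(t−h))/h ≤ −c z(t)` for all `t` is non-positive. -/
theorem stmt_19 (c : ℝ) (hc : 0 < c)
    (z : ℝ → ℝ) (K : NNReal) (hz : LipschitzWith K z)
    (B : ℝ) (hbd : ∀ t, |z t| ≤ B)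
    (hineq : ∀ t : ℝ,
      Filter.limsup (fun h : ℝ => (z t - z (t - h)) / h) (𝓝[>] (0 : ℝ)) ≤ -c * z t) :
    ∀ t, z t ≤ 0 := by
  intro t
  by_contra! hpos
  have hgrowth : Tendsto (fun u => z t * Real.exp (c * u)) atTop atTop :=
    (Real.tendsto_exp_atTop.comp (tendsto_id.const_mul_atTop hc)).const_mul_atTop hpos
  obtain ⟨u, hu_big, hu_nonneg⟩ :=
    ((hgrowth.eventually_gt_atTop B).and (eventually_ge_atTop 0)).exists
  have hpast := hz.mul_exp_le_of_limsup_slope_left_le hineq (sub_le_self t hu_nonneg)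
  rw [sub_sub_cancel] at hpast
  linarith [(abs_le.1 (hbd (t - u))).2]
end
end
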